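/- arXiv:2602.20949 — 2 statements merged into one kernel-verified Lean document; each statement's English description precedes it below -/
import Mathlib

section
/- Viewing S_σ as a cyclic string, for every a < σ−1 and every b ∈ {0,…,σ−1}, the 2-gram ab occurs exactly twice in S_σ (cyclically), and the set of characters c such that abc occurs as a cyclic 3-gram of S_σ is exactly {a, a+1}. -/
open List

/-- Block for symbol `a`: pairs (a,0)(a,1)⋯(a,σ-1) followed by a repeat of (a,σ-1). -/
def block (σ a : ℕ) : List ℕ :=
  ((List.range σ).flatMap fun b => [a, b]) ++ [a, σ - 1]

/-- The string S_σ: blocks for a = 0,…,σ-2 followed by the pair (σ-1,σ-1). -/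
def Sstr (σ : ℕ) : List ℕ :=
  ((List.range (σ - 1)).flatMap fun a => block σ a) ++ [σ - 1, σ - 1]

/-- Rotation of `S` by offset `i`. -/
def rot (S : List ℕ) (i : ℕ) : List ℕ := S.drop i ++ S.take i

/-- Cyclic k-gram of `S` starting at position `i` (indices mod `S.length`). -/
def cyc (S : List ℕ) (i k : ℕ) : List ℕ :=
  (List.range k).map fun j => S.getD ((i + j) % S.length) 0

/-- Number of cyclic occurrences of `u` in `S`. -/
def cOcc (S u : List ℕ) : ℕ :=
  ((List.range S.length).filter fun i => cyc S i u.length = u).length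

/-- `u` occurs as a cyclic substring of `S`. -/
def cOccurs (S u : List ℕ) : Prop := 0 < cOcc S u

/-- Number of runs (maximal blocks of equal symbols) of a list. -/
def runsCount (l : List ℕ) : ℕ := (l.destutter (· ≠ ·)).length

/-- Cyclic Burrows–Wheeler transform: sort all rotations lexicographically,
read the last column. -/
def cBWT (S : List ℕ) : List ℕ :=
  (((List.range S.length).map fun i => rot S i).insertionSort (· ≤ ·)).map
    fun ρ => ρ.getD (S.length - 1) 0

/-- Terminated string `t$`: symbols shifted by +1 and sentinel `0 = $` appended,
so the sentinel is strictly smaller than all alphabet symbols. -/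
def term (t : List ℕ) : List ℕ := (t.map (· + 1)) ++ [0]

/-- BWT of the terminated string `t$`: last column of the sorted rotation matrix. -/
def bwt (t : List ℕ) : List ℕ :=
  (((List.range (term t).length).map fun i => rot (term t) i).insertionSort (· ≤ ·)).map
    fun ρ => ρ.getD ((term t).length - 1) 0

/-- `x` is right-maximal in `w`: two distinct right extensions of `x` occur in `w`. -/
def RightMaximal (w x : List ℕ) : Prop :=
  ∃ a b : ℕ, a ≠ b ∧ (x ++ [a]) <:+: w ∧ (x ++ [b]) <:+: w

/-- The set of right-extensions of `w`. -/
def ExtSet (w : List ℕ) : Set (List ℕ) :=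
  {y | ∃ x a, RightMaximal w x ∧ y = x ++ [a] ∧ y <:+: w}

/-- Super-maximal right-extensions: right-extensions that are not a proper suffix
of another right-extension. -/
def SuperMax (w : List ℕ) : Set (List ℕ) :=
  {y ∈ ExtSet w | ∀ z ∈ ExtSet w, y <:+ z → y = z}

/-- χ: size of a smallest suffixient set = number of super-maximal right-extensions. -/
noncomputable def chi (w : List ℕ) : ℕ := (SuperMax w).ncard

/-- The regular cBWT block: each of 0,…,σ-1 twice in increasing order. -/
def patBlock (σ : ℕ) : List ℕ := (List.range σ).flatMap fun c => [c, c]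

/-- The final irregular cBWT block: each of 0,…,σ-3 twice, then σ-2, σ-1, σ-2. -/
def patFinal (σ : ℕ) : List ℕ :=
  ((List.range (σ - 2)).flatMap fun c => [c, c]) ++ [σ - 2, σ - 1, σ - 2]

/-- The canonical cBWT pattern: (σ-1) · (regular block)^m · final block. -/
def pattern (σ m : ℕ) : List ℕ :=
  [σ - 1] ++ (List.replicate m (patBlock σ)).flatten ++ patFinal σ

/-- `S` is 2-branching at order `k` over alphabet {0,…,σ-1}: every (k-1)-gram
occurs and its set of k-gram extensions is {u[0], (u[0]+1) mod σ}. -/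
def TwoBranching (σ k : ℕ) (S : List ℕ) : Prop :=
  ∀ u : List ℕ, u.length = k - 1 → (∀ x ∈ u, x < σ) →
    cOccurs S u ∧ ∀ c, c < σ →
      (cOccurs S (u ++ [c]) ↔ c = u.headD 0 ∨ c = (u.headD 0 + 1) % σ)


/-! Cut `S_σ` into the blocks of length `2σ + 2` and the final pair `(σ-1)(σ-1)`: position
`(2σ + 2) q + r` of block `q` holds `q` when `r` is even and `min (r / 2) (σ - 1)` when `r` is odd.
So a letter `a < σ - 1` followed by `b` sits either at an even offset of block `a`, and is then
followed by `a` again, or at offset `2a + 1` of block `b`, followed by `a + 1`; for `b = σ - 1` the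
latter occurrence is replaced by the end of block `a`, followed by the first letter `a + 1` of the
next block. -/

section UniformFlatMap

variable {α β : Type*} {f : α → List β} {L : ℕ}

lemma length_flatMap_of_length_eq (hf : ∀ x, (f x).length = L) (l : List α) :
    (l.flatMap f).length = l.length * L := by
  induction l with
  | nil => simp
  | cons x l ih => simp [hf, ih, Nat.succ_mul, Nat.add_comm]

lemma getD_flatMap_of_length_eq (hf : ∀ x, (f x).length = L) (d : β) :
    ∀ {l : List α} {q r : ℕ} (hq : q < l.length), r < L →
      (l.flatMap f).getD (L * q + r) d = (f l[q]).getD r d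
  | x :: l, 0, r, _, hr => by
    rw [List.flatMap_cons, Nat.mul_zero, Nat.zero_add,
      List.getD_append _ _ _ _ (by rw [hf]; exact hr)]
    rfl
  | x :: l, q + 1, r, hq, hr => by
    rw [List.flatMap_cons, List.getD_append_right _ _ _ _ (by rw [hf]; nlinarith), hf,
      show L * (q + 1) + r - L = L * q + r by rw [Nat.mul_succ]; omega,
      getD_flatMap_of_length_eq hf d (Nat.lt_of_succ_lt_succ hq) hr]
    rfl

end UniformFlatMap

section CyclicOccurrences

variable (S u : List ℕ)

lemma cyc_succ (i k : ℕ) : cyc S i (k + 1) = cyc S i k ++ [S.getD ((i + k) % S.length) 0] := by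
  simp [cyc, List.range_succ]

lemma cyc_two (i : ℕ) :
    cyc S i 2 = [S.getD (i % S.length) 0, S.getD ((i + 1) % S.length) 0] := by
  simp [cyc, List.range_succ]

lemma cyc_succ_eq_append_iff (i k c : ℕ) :
    cyc S i (k + 1) = u ++ [c] ↔ cyc S i k = u ∧ S.getD ((i + k) % S.length) 0 = c := by
  rw [cyc_succ]
  exact ⟨fun h => ⟨List.append_inj_left' h rfl, by simpa using List.append_inj_right' h rfl⟩,
    fun ⟨h₁, h₂⟩ => by rw [h₁, h₂]⟩

def cycOccurrences : Finset ℕ :=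
  (Finset.range S.length).filter fun i => cyc S i u.length = u

lemma cOcc_eq_card_cycOccurrences : cOcc S u = (cycOccurrences S u).card := rfl

lemma cOccurs_append_singleton_iff (c : ℕ) :
    cOccurs S (u ++ [c]) ↔
      ∃ p ∈ cycOccurrences S u, S.getD ((p + u.length) % S.length) 0 = c := by
  simp only [cOccurs, cOcc_eq_card_cycOccurrences, Finset.card_pos, Finset.Nonempty,
    cycOccurrences, Finset.mem_filter, Finset.mem_range, List.length_append,
    List.length_singleton, cyc_succ_eq_append_iff, and_assoc]

end CyclicOccurrences

section Sstr

lemma length_flatMap_range_pair (σ a : ℕ) :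
    ((List.range σ).flatMap fun b => [a, b]).length = 2 * σ := by
  rw [length_flatMap_of_length_eq (L := 2) fun _ => rfl, List.length_range, Nat.mul_comm]

lemma block_length (σ a : ℕ) : (block σ a).length = 2 * σ + 2 := by
  rw [block, List.length_append, length_flatMap_range_pair]
  rfl

lemma Sstr_length (σ : ℕ) : (Sstr σ).length = (2 * σ + 2) * (σ - 1) + 2 := by
  rw [Sstr, List.length_append, length_flatMap_of_length_eq (block_length σ), List.length_range,
    Nat.mul_comm]
  rfl

variable {σ : ℕ}

lemma block_getD_two_mul {a j : ℕ} (hj : j ≤ σ) : (block σ a).getD (2 * j) 0 = a := by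
  rw [block]
  rcases hj.lt_or_eq with hj | rfl
  · rw [List.getD_append _ _ _ _ (by rw [length_flatMap_range_pair]; omega),
      ← Nat.add_zero (2 * j),
      getD_flatMap_of_length_eq (L := 2) (fun _ => rfl) 0 (by simpa) two_pos]
    rfl
  · rw [List.getD_append_right _ _ _ _ (by rw [length_flatMap_range_pair]),
      length_flatMap_range_pair, Nat.sub_self]
    rfl

lemma block_getD_two_mul_add_one {a j : ℕ} (hj : j ≤ σ) :
    (block σ a).getD (2 * j + 1) 0 = min j (σ - 1) := by
  rw [block]
  rcases hj.lt_or_eq with hj | rfl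
  · rw [List.getD_append _ _ _ _ (by rw [length_flatMap_range_pair]; omega),
      getD_flatMap_of_length_eq (L := 2) (fun _ => rfl) 0 (by simpa) one_lt_two, List.getElem_range]
    exact (min_eq_left (show j ≤ σ - 1 by omega)).symm
  · rw [List.getD_append_right _ _ _ _ (by rw [length_flatMap_range_pair]; omega),
      length_flatMap_range_pair, Nat.add_sub_cancel_left]
    exact (min_eq_right (Nat.sub_le j 1)).symm

lemma Sstr_getD_block {q r : ℕ} (hq : q < σ - 1) (hr : r < 2 * σ + 2) :
    (Sstr σ).getD ((2 * σ + 2) * q + r) 0 = (block σ q).getD r 0 := by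
  have hlt : (2 * σ + 2) * q + r < (σ - 1) * (2 * σ + 2) := by
    nlinarith [Nat.mul_le_mul_left (2 * σ + 2) (Nat.succ_le_of_lt hq)]
  rw [Sstr, List.getD_append _ _ _ _
      (by rw [length_flatMap_of_length_eq (block_length σ), List.length_range]; exact hlt),
    getD_flatMap_of_length_eq (block_length σ) 0 (by simpa) hr, List.getElem_range]

lemma Sstr_getD_two_mul {q j : ℕ} (hq : q < σ - 1) (hj : j ≤ σ) :
    (Sstr σ).getD ((2 * σ + 2) * q + 2 * j) 0 = q := by
  rw [Sstr_getD_block hq (by omega), block_getD_two_mul hj]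

lemma Sstr_getD_two_mul_add_one {q j : ℕ} (hq : q < σ - 1) (hj : j ≤ σ) :
    (Sstr σ).getD ((2 * σ + 2) * q + (2 * j + 1)) 0 = min j (σ - 1) := by
  rw [Sstr_getD_block hq (by omega), block_getD_two_mul_add_one hj]

lemma Sstr_getD_tail {j : ℕ} (hj : j < 2) :
    (Sstr σ).getD ((2 * σ + 2) * (σ - 1) + j) 0 = σ - 1 := by
  have hlen : ((List.range (σ - 1)).flatMap (block σ)).length = (2 * σ + 2) * (σ - 1) := by
    rw [length_flatMap_of_length_eq (block_length σ), List.length_range, Nat.mul_comm]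
  rw [Sstr, List.getD_append_right _ _ _ _ (by rw [hlen]; omega), hlen, Nat.add_sub_cancel_left]
  interval_cases j <;> rfl

end Sstr

/- The two cyclic occurrences of `ab` for `a < σ - 1`: one inside block `a`; the other closes
block `a` when `b = σ - 1`, and otherwise straddles positions `2a+1, 2a+2` of block `b`. -/
def pairPos₁ (σ a b : ℕ) : ℕ := (2 * σ + 2) * a + 2 * b

def pairPos₂ (σ a b : ℕ) : ℕ :=
  if b = σ - 1 then (2 * σ + 2) * a + 2 * σ else (2 * σ + 2) * b + 2 * a + 1

section PairOccurrences

variable {σ a b : ℕ}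

lemma lt_of_Sstr_getD_lt {i : ℕ} (hi : i < (Sstr σ).length) (h : (Sstr σ).getD i 0 < σ - 1) :
    i < (2 * σ + 2) * (σ - 1) := by
  by_contra hge
  rw [Sstr_length] at hi
  obtain ⟨j, hj, rfl⟩ : ∃ j < 2, i = (2 * σ + 2) * (σ - 1) + j :=
    ⟨i - (2 * σ + 2) * (σ - 1), by omega, by omega⟩
  rw [Sstr_getD_tail hj] at h
  omega

lemma pairPos_add_two_le (ha : a < σ - 1) (hb : b < σ) :
    pairPos₁ σ a b + 2 ≤ (2 * σ + 2) * (σ - 1) ∧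
      pairPos₂ σ a b + 2 ≤ (2 * σ + 2) * (σ - 1) := by
  have hle : ∀ {x}, x < σ - 1 → (2 * σ + 2) * x + (2 * σ + 2) ≤ (2 * σ + 2) * (σ - 1) :=
    fun hx => by rw [← Nat.mul_succ]; exact Nat.mul_le_mul_left _ hx
  unfold pairPos₁ pairPos₂
  have := hle ha
  split_ifs
  · omega
  · have := hle (show b < σ - 1 by omega)
    omega

lemma pairPos₁_ne_pairPos₂ (hb : b < σ) : pairPos₁ σ a b ≠ pairPos₂ σ a b := by
  have hevenA : (2 * σ + 2) * a = 2 * ((σ + 1) * a) := by ring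
  have hevenB : (2 * σ + 2) * b = 2 * ((σ + 1) * b) := by ring
  unfold pairPos₁ pairPos₂
  split_ifs <;> omega

lemma Sstr_getD_pairPos₁ (ha : a < σ - 1) (hb : b < σ) :
    (Sstr σ).getD (pairPos₁ σ a b) 0 = a ∧ (Sstr σ).getD (pairPos₁ σ a b + 1) 0 = b ∧
      (Sstr σ).getD (pairPos₁ σ a b + 2) 0 = a := by
  unfold pairPos₁
  refine ⟨Sstr_getD_two_mul ha hb.le, ?_, ?_⟩
  · rw [add_assoc, Sstr_getD_two_mul_add_one ha hb.le]
    omega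
  · rw [add_assoc, show 2 * b + 2 = 2 * (b + 1) by ring, Sstr_getD_two_mul ha hb]

lemma Sstr_getD_pairPos₂ (ha : a < σ - 1) (hb : b < σ) :
    (Sstr σ).getD (pairPos₂ σ a b) 0 = a ∧ (Sstr σ).getD (pairPos₂ σ a b + 1) 0 = b ∧
      (Sstr σ).getD (pairPos₂ σ a b + 2) 0 = a + 1 := by
  unfold pairPos₂
  split_ifs with hbσ
  · refine ⟨Sstr_getD_two_mul ha le_rfl, ?_, ?_⟩
    · rw [add_assoc, Sstr_getD_two_mul_add_one ha le_rfl]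
      omega
    · rw [show (2 * σ + 2) * a + 2 * σ + 2 = (2 * σ + 2) * (a + 1) + 2 * 0 by ring]
      rcases Nat.lt_or_ge (a + 1) (σ - 1) with ha' | ha'
      · exact Sstr_getD_two_mul ha' (Nat.zero_le σ)
      · rw [show a + 1 = σ - 1 by omega, Sstr_getD_tail (by omega)]
  · have hb' : b < σ - 1 := by omega
    refine ⟨?_, ?_, ?_⟩
    · rw [add_assoc, Sstr_getD_two_mul_add_one hb' (by omega)]
      omega
    · rw [show (2 * σ + 2) * b + 2 * a + 1 + 1 = (2 * σ + 2) * b + 2 * (a + 1) by ring,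
        Sstr_getD_two_mul hb' (by omega)]
    · rw [show (2 * σ + 2) * b + 2 * a + 1 + 2 = (2 * σ + 2) * b + (2 * (a + 1) + 1) by ring,
        Sstr_getD_two_mul_add_one hb' (by omega)]
      omega

lemma eq_pairPos_of_Sstr_getD {i : ℕ} (ha : a < σ - 1) (hi : i < (2 * σ + 2) * (σ - 1))
    (h₀ : (Sstr σ).getD i 0 = a) (h₁ : (Sstr σ).getD (i + 1) 0 = b) :
    i = pairPos₁ σ a b ∨ i = pairPos₂ σ a b := by
  obtain ⟨q, r, hr, rfl⟩ : ∃ q r, r < 2 * σ + 2 ∧ i = (2 * σ + 2) * q + r :=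
    ⟨i / (2 * σ + 2), i % (2 * σ + 2), Nat.mod_lt _ (by omega), (Nat.div_add_mod _ _).symm⟩
  have hq : q < σ - 1 := Nat.lt_of_mul_lt_mul_left (a := 2 * σ + 2) (by omega)
  unfold pairPos₁ pairPos₂
  obtain ⟨j, rfl | rfl⟩ := Nat.even_or_odd' r
  · rw [Sstr_getD_two_mul hq (by omega)] at h₀
    rw [add_assoc, Sstr_getD_two_mul_add_one hq (by omega)] at h₁
    subst h₀
    split_ifs <;> omega
  · rw [Sstr_getD_two_mul_add_one hq (by omega)] at h₀
    rw [show (2 * σ + 2) * q + (2 * j + 1) + 1 = (2 * σ + 2) * q + 2 * (j + 1) by ring,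
      Sstr_getD_two_mul hq (by omega)] at h₁
    subst h₁
    rw [if_neg (by omega)]
    omega

lemma cycOccurrences_Sstr_pair (ha : a < σ - 1) (hb : b < σ) :
    cycOccurrences (Sstr σ) [a, b] = {pairPos₁ σ a b, pairPos₂ σ a b} := by
  have hlen := Sstr_length σ
  obtain ⟨hle₁, hle₂⟩ := pairPos_add_two_le ha hb
  ext i
  rw [cycOccurrences, Finset.mem_filter, Finset.mem_range, Finset.mem_insert,
    Finset.mem_singleton, show ([a, b] : List ℕ).length = 2 from rfl, cyc_two]
  simp only [List.cons.injEq, and_true]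
  constructor
  · rintro ⟨hi, h₀, h₁⟩
    rw [Nat.mod_eq_of_lt hi] at h₀
    have hi' := lt_of_Sstr_getD_lt hi (h₀ ▸ ha)
    rw [Nat.mod_eq_of_lt (by omega)] at h₁
    exact eq_pairPos_of_Sstr_getD ha hi' h₀ h₁
  · rintro (rfl | rfl)
    · rw [Nat.mod_eq_of_lt (by omega), Nat.mod_eq_of_lt (by omega)]
      exact ⟨by omega, (Sstr_getD_pairPos₁ ha hb).1, (Sstr_getD_pairPos₁ ha hb).2.1⟩
    · rw [Nat.mod_eq_of_lt (by omega), Nat.mod_eq_of_lt (by omega)]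
      exact ⟨by omega, (Sstr_getD_pairPos₂ ha hb).1, (Sstr_getD_pairPos₂ ha hb).2.1⟩

end PairOccurrences

theorem stmt2_general (σ : ℕ) (a b : ℕ) (ha : a < σ - 1) (hb : b < σ) :
    cOcc (Sstr σ) [a, b] = 2 ∧
    {c | c < σ ∧ cOccurs (Sstr σ) [a, b, c]} = ({a, a + 1} : Set ℕ) := by
  have hocc := cycOccurrences_Sstr_pair ha hb
  have hlen := Sstr_length σ
  obtain ⟨hle₁, hle₂⟩ := pairPos_add_two_le ha hb
  have hnext₁ : (Sstr σ).getD ((pairPos₁ σ a b + 2) % (Sstr σ).length) 0 = a := by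
    rw [Nat.mod_eq_of_lt (by omega), (Sstr_getD_pairPos₁ ha hb).2.2]
  have hnext₂ : (Sstr σ).getD ((pairPos₂ σ a b + 2) % (Sstr σ).length) 0 = a + 1 := by
    rw [Nat.mod_eq_of_lt (by omega), (Sstr_getD_pairPos₂ ha hb).2.2]
  refine ⟨by rw [cOcc_eq_card_cycOccurrences, hocc, Finset.card_pair (pairPos₁_ne_pairPos₂ hb)],
    ?_⟩
  ext c
  rw [Set.mem_ofPred_eq, show [a, b, c] = [a, b] ++ [c] from rfl, cOccurs_append_singleton_iff,
    hocc]
  simp only [Finset.mem_insert, Finset.mem_singleton, exists_eq_or_imp, exists_eq_left,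
    List.length_cons, List.length_nil, hnext₁, hnext₂, Set.mem_insert_iff, Set.mem_singleton_iff]
  omega

/-- for a < σ-1 and b < σ, the 2-gram `ab` occurs exactly twice
cyclically in S_σ, and its set of 3-gram extensions is exactly {a, a+1}. -/
theorem stmt2 (σ : ℕ) (hσ : 2 ≤ σ) (a b : ℕ) (ha : a < σ - 1) (hb : b < σ) :
    cOcc (Sstr σ) [a, b] = 2 ∧
    {c | c < σ ∧ cOccurs (Sstr σ) [a, b, c]} = ({a, a + 1} : Set ℕ) :=
  stmt2_general σ a b ha hb
end

section
/- The cyclic Burrows–Wheeler Transform of S_σ has exactly σ² + 2 runs. -/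
open List

/-
Write `σ = s + 2` and read `Sstr σ` as a sequence of pairs. Its `2σ²` cyclic 3-grams are
pairwise distinct: they are exactly the words `c b d` with `d ∈ {c, c + 1 mod σ}`, each
occurring once. Hence the rotations are ordered by their first three symbols alone, which makes
the sorted order explicit. Reading off the symbol preceding each rotation gives
`cBWT (Sstr σ) = pattern σ (σ - 1)`, i.e.
`(σ-1) · (0 0 1 1 ⋯ (σ-1) (σ-1))^(σ-1) · 0 0 ⋯ (σ-3) (σ-3) (σ-2) (σ-1) (σ-2)`,
which has `1 + σ (σ - 1) + (σ + 1) = σ² + 2` runs.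
-/

section ListLemmas

variable {α : Type*}

lemma length_flatMap_range {g : ℕ → List α} {L m : ℕ} (h : ∀ i < m, (g i).length = L) :
    ((range m).flatMap g).length = m * L := by
  rw [length_flatMap, map_congr_left fun i hi => h i (mem_range.1 hi), map_const', length_range,
    sum_replicate, smul_eq_mul]

lemma getD_flatMap_range {g : ℕ → List α} {L m : ℕ} (h : ∀ i < m, (g i).length = L)
    {a r : ℕ} (ha : a < m) (hr : r < L) (d : α) :
    ((range m).flatMap g).getD (L * a + r) d = (g a).getD r d := by
  induction m with
  | zero => omega
  | succ m ih =>
    have hlen := length_flatMap_range fun i (hi : i < m) => h i (by omega)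
    rw [range_succ, flatMap_append, flatMap_singleton]
    rcases Nat.lt_or_ge a m with ham | hma
    · rw [getD_append _ _ _ _ (by rw [hlen]; nlinarith), ih (fun i hi => h i (by omega)) ham]
    · obtain rfl : a = m := by omega
      rw [getD_append_right _ _ _ _ (by rw [hlen]; nlinarith), hlen, Nat.mul_comm,
        Nat.add_sub_cancel_left]

lemma cons_flatMap_range_pair_append (f g : ℕ → α) (m : ℕ) :
    f 0 :: (((range m).flatMap fun b => [g b, f (b + 1)]) ++ [g m]) =
      (range (m + 1)).flatMap fun b => [f b, g b] := by
  induction m with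
  | zero => simp
  | succ m ih =>
    rw [range_succ (n := m + 1), flatMap_append, ← ih, range_succ, flatMap_append]
    simp

lemma flatMap_range_const_cons_append (x : α) (l r : List α) (k : ℕ) :
    ((range k).flatMap fun _ => x :: l) ++ x :: r =
      x :: ((replicate k (l ++ [x])).flatten ++ r) := by
  induction k with
  | zero => simp
  | succ k ih =>
    rw [range_succ_eq_map, flatMap_cons, flatMap_map, append_assoc, ih, replicate_succ,
      flatten_cons]
    simp

lemma append_lt_append_of_lt_of_length_eq [LT α] {l₁ l₂ : List α} (m₁ m₂ : List α)
    (hlen : l₁.length = l₂.length) (h : l₁ < l₂) : l₁ ++ m₁ < l₂ ++ m₂ := by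
  induction l₁ generalizing l₂ with
  | nil => cases l₂ <;> simp_all
  | cons a l₁ ih =>
    cases l₂ with
    | nil => simp at hlen
    | cons b l₂ =>
      rw [cons_lt_cons_iff] at h
      rcases h with h | ⟨rfl, h⟩
      · exact cons_lt_cons_iff.2 (Or.inl h)
      · exact cons_lt_cons_iff.2 (Or.inr ⟨rfl, ih (by simpa using hlen) h⟩)

end ListLemmas

section Rotations

variable (S : List ℕ)

def symAt (p : ℕ) : ℕ := S.getD (p % S.length) 0

def symBefore (i : ℕ) : ℕ := symAt S (i + (S.length - 1))

variable {S}

lemma symAt_add_length (p : ℕ) : symAt S (p + S.length) = symAt S p := by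
  simp [symAt]

lemma symBefore_succ (p : ℕ) : symBefore S (p + 1) = symAt S p := by
  rcases S with _ | ⟨x, S⟩
  · simp [symBefore, symAt]
  · rw [symBefore, show p + 1 + ((x :: S).length - 1) = p + (x :: S).length by simp; omega,
      symAt_add_length]

lemma cyc_three (i : ℕ) : cyc S i 3 = [symAt S i, symAt S (i + 1), symAt S (i + 2)] := rfl

lemma length_cyc (i k : ℕ) : (cyc S i k).length = k := by simp [cyc]

lemma cyc_add (i k l : ℕ) : cyc S i (k + l) = cyc S i k ++ cyc S (i + k) l := by
  simp [cyc, range_add, Nat.add_assoc]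

lemma rot_eq_cyc {i : ℕ} (hi : i ≤ S.length) : rot S i = cyc S i S.length := by
  rw [rot, ← rotate_eq_drop_append_take hi]
  apply ext_getElem (by simp [length_cyc])
  intro t h _
  have hS : 0 < S.length := by simp at h; omega
  simp [cyc, getElem_rotate, Nat.add_comm t i, getD_eq_getElem?_getD,
    getElem?_eq_getElem (Nat.mod_lt _ hS)]

lemma getD_rot_length_sub_one {i : ℕ} (hi : i < S.length) :
    (rot S i).getD (S.length - 1) 0 = symBefore S i := by
  rw [rot_eq_cyc hi.le, cyc, getD_eq_getElem?_getD, getElem?_map,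
    getElem?_range (by omega)]
  rfl

lemma rot_lt_rot_of_cyc_lt {i j k : ℕ} (hi : i ≤ S.length) (hj : j ≤ S.length)
    (hk : k ≤ S.length) (h : cyc S i k < cyc S j k) : rot S i < rot S j := by
  rw [rot_eq_cyc hi, rot_eq_cyc hj, ← Nat.add_sub_cancel' hk, cyc_add, cyc_add]
  exact append_lt_append_of_lt_of_length_eq _ _ (by simp [length_cyc]) h

lemma insertionSort_rot_eq {k : ℕ} {idx : List ℕ} (hk : k ≤ S.length)
    (hidx : ∀ i ∈ idx, i < S.length) (hlen : idx.length = S.length)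
    (hkeys : (idx.map fun i => cyc S i k).Pairwise (· < ·)) :
    ((range S.length).map (rot S)).insertionSort (· ≤ ·) = idx.map (rot S) := by
  have hsorted : (idx.map (rot S)).Pairwise (· < ·) :=
    pairwise_map.2 <| (pairwise_map.1 hkeys).imp_of_mem fun hi hj h =>
      rot_lt_rot_of_cyc_lt (hidx _ hi).le (hidx _ hj).le hk h
  have hperm : idx.map (rot S) ~ (range S.length).map (rot S) := by
    refine (Nodup.subperm (hsorted.imp ne_of_lt) fun x hx => ?_).perm_of_length_le (by simp [hlen])
    obtain ⟨i, hi, rfl⟩ := mem_map.1 hx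
    exact mem_map.2 ⟨i, mem_range.2 (hidx i hi), rfl⟩
  exact Perm.eq_of_pairwise' (pairwise_insertionSort _ _) (hsorted.imp le_of_lt)
    ((perm_insertionSort _ _).trans hperm.symm)

lemma cBWT_eq_map_symBefore {k : ℕ} {idx : List ℕ} (hk : k ≤ S.length)
    (hidx : ∀ i ∈ idx, i < S.length) (hlen : idx.length = S.length)
    (hkeys : (idx.map fun i => cyc S i k).Pairwise (· < ·)) :
    cBWT S = idx.map (symBefore S) := by
  rw [cBWT, insertionSort_rot_eq hk hidx hlen hkeys, map_map]
  exact map_congr_left fun i hi => getD_rot_length_sub_one (hidx i hi)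

end Rotations

section Runs

lemma runsCount_cons_cons_self (a : ℕ) (l : List ℕ) :
    runsCount (a :: a :: l) = runsCount (a :: l) := by
  simp [runsCount, destutter_cons']

lemma runsCount_cons_cons_of_ne {a b : ℕ} (l : List ℕ) (h : a ≠ b) :
    runsCount (a :: b :: l) = runsCount (b :: l) + 1 := by
  simp [runsCount, destutter_cons', h]

lemma runsCount_cons_patBlock_append {x : ℕ} (hx : x ≠ 0) (k : ℕ) (r : List ℕ) :
    runsCount (x :: (patBlock (k + 1) ++ r)) = runsCount (k :: r) + (k + 1) := by
  induction k generalizing r with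
  | zero => simp [patBlock, runsCount_cons_cons_of_ne _ hx, runsCount_cons_cons_self]
  | succ k ih =>
    rw [patBlock, range_succ, flatMap_append, append_assoc, ← patBlock, flatMap_singleton,
      cons_append, cons_append, nil_append, ih, runsCount_cons_cons_of_ne _ (by omega),
      runsCount_cons_cons_self]
    ring

lemma runsCount_cons_flatten_replicate_patBlock (s m : ℕ) (r : List ℕ) :
    runsCount ((s + 1) :: ((replicate m (patBlock (s + 2))).flatten ++ r)) =
      runsCount ((s + 1) :: r) + (s + 2) * m := by
  induction m with
  | zero => simp
  | succ m ih =>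
    rw [replicate_succ, flatten_cons, append_assoc,
      runsCount_cons_patBlock_append (by omega), ih]
    ring

lemma runsCount_cons_patFinal (s : ℕ) : runsCount ((s + 1) :: patFinal (s + 2)) = s + 4 := by
  have hfinal : patFinal (s + 2) = patBlock s ++ [s, s + 1, s] := by simp [patFinal, patBlock]
  rw [hfinal]
  cases s with
  | zero => decide
  | succ t =>
    rw [runsCount_cons_patBlock_append (by omega), runsCount_cons_cons_of_ne _ (by omega),
      runsCount_cons_cons_of_ne _ (by omega), runsCount_cons_cons_of_ne _ (by omega)]
    simp [runsCount]
    omega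

lemma runsCount_pattern (s m : ℕ) : runsCount (pattern (s + 2) m) = (s + 2) * (m + 1) + 2 := by
  rw [pattern, show s + 2 - 1 = s + 1 from rfl, singleton_append, cons_append,
    runsCount_cons_flatten_replicate_patBlock, runsCount_cons_patFinal]
  ring

end Runs

section SigmaString

lemma block_eq_flatMap (σ a : ℕ) :
    block σ a = (range (σ + 1)).flatMap fun b => [a, min b (σ - 1)] := by
  rw [block, range_succ, flatMap_append, flatMap_singleton, min_eq_right (Nat.sub_le σ 1)]
  congr 1
  exact flatMap_congr fun b hb => by rw [min_eq_left (by simp at hb; omega)]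

lemma length_block (σ a : ℕ) : (block σ a).length = 2 * (σ + 1) := by
  rw [block_eq_flatMap, length_flatMap_range (L := 2) fun _ _ => rfl, Nat.mul_comm]

lemma length_Sstr (s : ℕ) : (Sstr (s + 2)).length = 2 * ((s + 1) * (s + 3)) + 2 := by
  rw [Sstr, length_append, length_flatMap_range fun i _ => length_block _ i,
    show s + 2 - 1 = s + 1 from rfl]
  simp only [length_cons, length_nil]
  ring

lemma pos_lt_final_pair {s c j : ℕ} (hc : c ≤ s) (hj : j ≤ s + 2) :
    2 * (c * (s + 3) + j) + 1 < 2 * ((s + 1) * (s + 3)) := by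
  have := Nat.mul_le_mul_right (s + 3) hc
  nlinarith

lemma getD_Sstr {s c j e : ℕ} (hc : c ≤ s) (hj : j ≤ s + 2) (he : e < 2) :
    (Sstr (s + 2)).getD (2 * (c * (s + 3) + j) + e) 0 = [c, min j (s + 1)].getD e 0 := by
  have hpos : 2 * (c * (s + 3) + j) + e = 2 * (s + 3) * c + (2 * j + e) := by ring
  have hlt := pos_lt_final_pair hc hj
  rw [Sstr, show s + 2 - 1 = s + 1 from rfl, getD_append _ _ _ _ (by
      rw [length_flatMap_range fun i _ => length_block _ i]; nlinarith),
    hpos, getD_flatMap_range (fun i _ => length_block _ i) (by omega) (by omega),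
    block_eq_flatMap, getD_flatMap_range (L := 2) (fun _ _ => rfl) (by omega) he]
  rfl

lemma getD_Sstr_last {s e : ℕ} (he : e < 2) :
    (Sstr (s + 2)).getD (2 * ((s + 1) * (s + 3)) + e) 0 = s + 1 := by
  have hlen : ((range (s + 1)).flatMap fun a => block (s + 2) a).length
      = 2 * ((s + 1) * (s + 3)) := by
    rw [length_flatMap_range fun i _ => length_block _ i]; ring
  rw [Sstr, show s + 2 - 1 = s + 1 from rfl, getD_append_right _ _ _ _ (by omega), hlen,
    Nat.add_sub_cancel_left]
  interval_cases e <;> rfl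

variable {s : ℕ}

lemma symAt_Sstr_wrap (p : ℕ) :
    symAt (Sstr (s + 2)) (p + (2 * ((s + 1) * (s + 3)) + 2)) = symAt (Sstr (s + 2)) p := by
  rw [← length_Sstr, symAt_add_length]

lemma symAt_Sstr_pair {c j e : ℕ} (hc : c ≤ s) (hj : j ≤ s + 2) (he : e < 2) :
    symAt (Sstr (s + 2)) (2 * (c * (s + 3) + j) + e) = [c, min j (s + 1)].getD e 0 := by
  have := pos_lt_final_pair hc hj
  rw [symAt, length_Sstr, Nat.mod_eq_of_lt (by omega), getD_Sstr hc hj he]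

lemma symAt_Sstr_even {c j : ℕ} (hc : c ≤ s) (hj : j ≤ s + 2) :
    symAt (Sstr (s + 2)) (2 * (c * (s + 3) + j)) = c :=
  symAt_Sstr_pair hc hj (e := 0) (by omega)

lemma symAt_Sstr_odd {c j : ℕ} (hc : c ≤ s) (hj : j ≤ s + 2) :
    symAt (Sstr (s + 2)) (2 * (c * (s + 3) + j) + 1) = min j (s + 1) :=
  symAt_Sstr_pair hc hj (by omega)

lemma symAt_Sstr_last {e : ℕ} (he : e < 2) :
    symAt (Sstr (s + 2)) (2 * ((s + 1) * (s + 3)) + e) = s + 1 := by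
  rw [symAt, length_Sstr, Nat.mod_eq_of_lt (by omega), getD_Sstr_last he]

lemma symAt_Sstr_blockStart {c : ℕ} (hc : c ≤ s) :
    symAt (Sstr (s + 2)) (2 * ((c + 1) * (s + 3))) = c + 1 := by
  rcases hc.lt_or_eq with hc | rfl
  · simpa using symAt_Sstr_even (j := 0) hc (by omega)
  · simpa using symAt_Sstr_last (s := c) (e := 0) (by omega)

lemma symAt_Sstr_zero : symAt (Sstr (s + 2)) 0 = 0 := by
  simpa using symAt_Sstr_even (c := 0) (j := 0) (Nat.zero_le s) (by omega)

lemma symAt_Sstr_one : symAt (Sstr (s + 2)) 1 = 0 := by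
  simpa using symAt_Sstr_odd (c := 0) (j := 0) (Nat.zero_le s) (by omega)

lemma cyc_Sstr_even {c j : ℕ} (hc : c ≤ s) (hj : j ≤ s + 1) :
    cyc (Sstr (s + 2)) (2 * (c * (s + 3) + j)) 3 = [c, j, c] := by
  rw [cyc_three, show 2 * (c * (s + 3) + j) + 2 = 2 * (c * (s + 3) + (j + 1)) by ring,
    symAt_Sstr_even hc (by omega), symAt_Sstr_odd hc (by omega), symAt_Sstr_even hc (by omega),
    min_eq_left hj]

lemma cyc_Sstr_even_last {c : ℕ} (hc : c ≤ s) :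
    cyc (Sstr (s + 2)) (2 * (c * (s + 3) + (s + 2))) 3 = [c, s + 1, c + 1] := by
  rw [cyc_three, show 2 * (c * (s + 3) + (s + 2)) + 2 = 2 * ((c + 1) * (s + 3)) by ring,
    symAt_Sstr_even hc le_rfl, symAt_Sstr_odd hc le_rfl, symAt_Sstr_blockStart hc]
  simp

lemma cyc_Sstr_odd {a j : ℕ} (ha : a ≤ s) (hj : j ≤ s + 1) :
    cyc (Sstr (s + 2)) (2 * (a * (s + 3) + j) + 1) 3 = [j, a, min (j + 1) (s + 1)] := by
  rw [cyc_three, show 2 * (a * (s + 3) + j) + 1 + 1 = 2 * (a * (s + 3) + (j + 1)) by ring,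
    show 2 * (a * (s + 3) + j) + 1 + 2 = 2 * (a * (s + 3) + (j + 1)) + 1 by ring,
    symAt_Sstr_odd ha (by omega), symAt_Sstr_even ha (by omega), symAt_Sstr_odd ha (by omega),
    min_eq_left hj]

lemma cyc_Sstr_odd_last {a : ℕ} (ha : a < s) :
    cyc (Sstr (s + 2)) (2 * (a * (s + 3) + (s + 2)) + 1) 3 = [s + 1, a + 1, 0] := by
  rw [cyc_three, show 2 * (a * (s + 3) + (s + 2)) + 1 + 1 = 2 * ((a + 1) * (s + 3) + 0) by ring,
    show 2 * (a * (s + 3) + (s + 2)) + 1 + 2 = 2 * ((a + 1) * (s + 3) + 0) + 1 by ring,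
    symAt_Sstr_odd ha.le le_rfl, symAt_Sstr_even ha (by omega), symAt_Sstr_odd ha (by omega)]
  simp

lemma cyc_Sstr_odd_top :
    cyc (Sstr (s + 2)) (2 * (s * (s + 3) + (s + 2)) + 1) 3 = [s + 1, s + 1, s + 1] := by
  rw [cyc_three, show 2 * (s * (s + 3) + (s + 2)) + 1 + 1 = 2 * ((s + 1) * (s + 3)) + 0 by ring,
    show 2 * (s * (s + 3) + (s + 2)) + 1 + 2 = 2 * ((s + 1) * (s + 3)) + 1 by ring,
    symAt_Sstr_odd le_rfl le_rfl, symAt_Sstr_last (by omega), symAt_Sstr_last (by omega)]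
  simp

lemma cyc_Sstr_last : cyc (Sstr (s + 2)) (2 * ((s + 1) * (s + 3))) 3 = [s + 1, s + 1, 0] := by
  rw [cyc_three, show 2 * ((s + 1) * (s + 3)) + 2 = 0 + (2 * ((s + 1) * (s + 3)) + 2) by ring,
    symAt_Sstr_wrap, symAt_Sstr_zero, symAt_Sstr_last (by omega),
    show symAt (Sstr (s + 2)) (2 * ((s + 1) * (s + 3))) = s + 1 from
      symAt_Sstr_last (e := 0) (by omega)]

lemma cyc_Sstr_last_succ :
    cyc (Sstr (s + 2)) (2 * ((s + 1) * (s + 3)) + 1) 3 = [s + 1, 0, 0] := by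
  rw [cyc_three, show 2 * ((s + 1) * (s + 3)) + 1 + 1 = 0 + (2 * ((s + 1) * (s + 3)) + 2) by ring,
    show 2 * ((s + 1) * (s + 3)) + 1 + 2 = 1 + (2 * ((s + 1) * (s + 3)) + 2) by ring,
    symAt_Sstr_wrap, symAt_Sstr_wrap, symAt_Sstr_zero, symAt_Sstr_one, symAt_Sstr_last (by omega)]

lemma symBefore_Sstr_odd {a j : ℕ} (ha : a ≤ s) (hj : j ≤ s + 2) :
    symBefore (Sstr (s + 2)) (2 * (a * (s + 3) + j) + 1) = a := by
  rw [symBefore_succ, symAt_Sstr_even ha hj]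

lemma symBefore_Sstr_even_succ {c j : ℕ} (hc : c ≤ s) (hj : j ≤ s + 1) :
    symBefore (Sstr (s + 2)) (2 * (c * (s + 3) + (j + 1))) = j := by
  rw [show 2 * (c * (s + 3) + (j + 1)) = 2 * (c * (s + 3) + j) + 1 + 1 by ring, symBefore_succ,
    symAt_Sstr_odd hc (by omega), min_eq_left hj]

lemma symBefore_Sstr_blockStart {c : ℕ} (hc : c ≤ s) :
    symBefore (Sstr (s + 2)) (2 * (c * (s + 3))) = s + 1 := by
  rcases c with _ | c
  · rw [symBefore, length_Sstr, show 2 * (0 * (s + 3)) + (2 * ((s + 1) * (s + 3)) + 2 - 1)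
      = 2 * ((s + 1) * (s + 3)) + 1 by ring_nf; omega, symAt_Sstr_last (by omega)]
  · rw [show 2 * ((c + 1) * (s + 3)) = 2 * (c * (s + 3) + (s + 2)) + 1 + 1 by ring,
      symBefore_succ, symAt_Sstr_odd (by omega) le_rfl]
    simp

lemma symBefore_Sstr_last {e : ℕ} (he : e < 2) :
    symBefore (Sstr (s + 2)) (2 * ((s + 1) * (s + 3)) + e) = s + 1 := by
  interval_cases e
  · rw [show 2 * ((s + 1) * (s + 3)) + 0 = 2 * (s * (s + 3) + (s + 2)) + 1 + 1 by ring,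
      symBefore_succ, symAt_Sstr_odd le_rfl le_rfl]
    simp
  · rw [symBefore_succ]
    exact symAt_Sstr_last (e := 0) (by omega)

end SigmaString

section SortedOrder

variable (s : ℕ)

/-- Position `2 * (c * (s + 3) + j) + e` (`c ≤ s`, `j ≤ s + 2`, `e < 2`) holds symbol `e` of the
`j`-th pair of `block (s + 2) c`; the final pair `(s + 1, s + 1)` starts at
`2 * ((s + 1) * (s + 3))`. `groupIdx s c` lists the positions whose rotation starts with `c ≤ s`,
`topIdx s` those starting with `s + 1`, each in increasing order of the rotations. -/
def groupIdx (c : ℕ) : List ℕ :=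
  2 * (c * (s + 3)) :: (((range (s + 1)).flatMap fun b =>
    [2 * (b * (s + 3) + c) + 1, 2 * (c * (s + 3) + (b + 1))]) ++ [2 * (c * (s + 3) + (s + 2))])

def topIdx : List ℕ :=
  (2 * ((s + 1) * (s + 3)) + 1) :: (((range s).flatMap fun b =>
    [2 * (b * (s + 3) + (s + 1)) + 1, 2 * (b * (s + 3) + (s + 2)) + 1]) ++
    [2 * (s * (s + 3) + (s + 1)) + 1, 2 * ((s + 1) * (s + 3)), 2 * (s * (s + 3) + (s + 2)) + 1])

def sortedIdx : List ℕ := (range (s + 1)).flatMap (groupIdx s) ++ topIdx s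

/-- The symbols following a cyclic 2-gram that starts with `c`: `c` and `c + 1 mod (s + 2)`, in
increasing order. -/
def rightExts (c : ℕ) : List ℕ := if c ≤ s then [c, c + 1] else [0, s + 1]

def sortedTrigrams : List (List ℕ) :=
  (range (s + 2)).flatMap fun c => (range (s + 2)).flatMap fun b =>
    (rightExts s c).map fun d => [c, b, d]

lemma pairwise_sortedTrigrams : (sortedTrigrams s).Pairwise (· < ·) := by
  have hext : ∀ c, (rightExts s c).Pairwise (· < ·) := by
    intro c; unfold rightExts; split_ifs <;> simp
  refine pairwise_flatMap.2 ⟨fun c _ => pairwise_flatMap.2 ⟨fun b _ => ?_, ?_⟩, ?_⟩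
  · exact pairwise_map.2 ((hext c).imp fun h => by simp [cons_lt_cons_iff, h])
  · refine pairwise_lt_range.imp fun hbb' x hx y hy => ?_
    obtain ⟨d, -, rfl⟩ := mem_map.1 hx
    obtain ⟨d', -, rfl⟩ := mem_map.1 hy
    simp [cons_lt_cons_iff, hbb']
  · refine pairwise_lt_range.imp fun hcc' x hx y hy => ?_
    obtain ⟨b, -, hx⟩ := mem_flatMap.1 hx
    obtain ⟨d, -, rfl⟩ := mem_map.1 hx
    obtain ⟨b', -, hy⟩ := mem_flatMap.1 hy
    obtain ⟨d', -, rfl⟩ := mem_map.1 hy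
    simp [cons_lt_cons_iff, hcc']

variable {s}

lemma map_cyc_groupIdx {c : ℕ} (hc : c ≤ s) :
    (groupIdx s c).map (fun i => cyc (Sstr (s + 2)) i 3) =
      (range (s + 2)).flatMap fun b => [[c, b, c], [c, b, c + 1]] := by
  have hhead : cyc (Sstr (s + 2)) (2 * (c * (s + 3))) 3 = [c, 0, c] := by
    simpa using cyc_Sstr_even (j := 0) hc (by omega)
  rw [← cons_flatMap_range_pair_append (fun b => [c, b, c]) (fun b => [c, b, c + 1]),
    groupIdx, map_cons, map_append, map_flatMap, hhead, map_singleton, cyc_Sstr_even_last hc]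
  congr 2
  refine flatMap_congr fun b hb => ?_
  have hb := mem_range.1 hb
  rw [map_cons, map_cons, map_nil, cyc_Sstr_odd (by omega) (by omega),
    cyc_Sstr_even hc (by omega), min_eq_left (by omega)]

lemma map_cyc_topIdx :
    (topIdx s).map (fun i => cyc (Sstr (s + 2)) i 3) =
      (range (s + 2)).flatMap fun b => [[s + 1, b, 0], [s + 1, b, s + 1]] := by
  rw [← cons_flatMap_range_pair_append (fun b => [s + 1, b, 0]) (fun b => [s + 1, b, s + 1]),
    range_succ, flatMap_append, topIdx, map_cons, map_append, map_flatMap, cyc_Sstr_last_succ]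
  simp only [map_cons, map_nil, flatMap_singleton, append_assoc, cons_append, nil_append,
    cyc_Sstr_odd le_rfl (le_refl (s + 1)), min_eq_right (Nat.le_succ (s + 1)), cyc_Sstr_last,
    cyc_Sstr_odd_top]
  congr 2
  refine flatMap_congr fun b hb => ?_
  have hb := mem_range.1 hb
  rw [cyc_Sstr_odd hb.le le_rfl, cyc_Sstr_odd_last hb]
  simp

lemma map_cyc_sortedIdx :
    (sortedIdx s).map (fun i => cyc (Sstr (s + 2)) i 3) = sortedTrigrams s := by
  rw [sortedIdx, sortedTrigrams, range_succ (n := s + 1), flatMap_append, flatMap_singleton,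
    map_append, map_flatMap, map_cyc_topIdx, rightExts, if_neg (by omega), ← range_succ]
  congr 1
  refine flatMap_congr fun c hc => ?_
  have hc : c ≤ s := by simp at hc; omega
  rw [map_cyc_groupIdx hc, rightExts, if_pos hc]
  rfl

lemma length_sortedIdx : (sortedIdx s).length = (Sstr (s + 2)).length := by
  have hgroup : ∀ c, (groupIdx s c).length = 2 * (s + 2) := fun c => by
    simp [groupIdx, length_flatMap_range (L := 2)]; ring
  have htop : (topIdx s).length = 2 * (s + 2) := by
    simp [topIdx, length_flatMap_range (L := 2)]; ring
  rw [sortedIdx, length_append, length_flatMap_range fun c _ => hgroup c, htop, length_Sstr]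
  ring

lemma lt_length_of_mem_sortedIdx {i : ℕ} (hi : i ∈ sortedIdx s) :
    i < (Sstr (s + 2)).length := by
  have hlast : (s + 1) * (s + 3) = s * (s + 3) + (s + 3) := by ring
  have hmul : ∀ a < s + 1, a * (s + 3) ≤ s * (s + 3) := fun a ha =>
    Nat.mul_le_mul_right _ (by omega)
  rw [length_Sstr]
  simp only [sortedIdx, groupIdx, topIdx, mem_append, mem_flatMap, mem_range, mem_cons,
    not_mem_nil, or_false] at hi
  rcases hi with ⟨c, hc, hi⟩ | hi
  · have := hmul c hc
    rcases hi with rfl | ⟨b, hb, rfl | rfl⟩ | rfl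
    all_goals (try have := hmul b hb); omega
  · rcases hi with rfl | ⟨b, hb, rfl | rfl⟩ | rfl | rfl | rfl
    all_goals (try have := hmul b (by omega)); omega

lemma map_symBefore_groupIdx {c : ℕ} (hc : c ≤ s) :
    (groupIdx s c).map (symBefore (Sstr (s + 2))) =
      (s + 1) :: (patBlock (s + 1) ++ [s + 1]) := by
  rw [groupIdx, map_cons, map_append, map_flatMap, symBefore_Sstr_blockStart hc, map_singleton,
    symBefore_Sstr_even_succ (j := s + 1) hc le_rfl, patBlock]
  congr 2
  refine flatMap_congr fun b hb => ?_
  have hb := mem_range.1 hb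
  rw [map_cons, map_cons, map_nil, symBefore_Sstr_odd (by omega) (by omega),
    symBefore_Sstr_even_succ hc (by omega)]

lemma map_symBefore_topIdx :
    (topIdx s).map (symBefore (Sstr (s + 2))) = (s + 1) :: (patBlock s ++ [s, s + 1, s]) := by
  rw [topIdx, map_cons, map_append, map_flatMap, symBefore_Sstr_last (by omega), patBlock]
  simp only [map_cons, map_nil, symBefore_Sstr_odd le_rfl (by omega : s + 1 ≤ s + 2),
    symBefore_Sstr_odd le_rfl le_rfl,
    show symBefore (Sstr (s + 2)) (2 * ((s + 1) * (s + 3))) = s + 1 from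
      symBefore_Sstr_last (e := 0) (by omega)]
  congr 2
  refine flatMap_congr fun b hb => ?_
  have hb := mem_range.1 hb
  rw [symBefore_Sstr_odd (by omega) (by omega), symBefore_Sstr_odd (by omega) le_rfl]

theorem cBWT_Sstr : cBWT (Sstr (s + 2)) = pattern (s + 2) (s + 1) := by
  have hkeys : ((sortedIdx s).map fun i => cyc (Sstr (s + 2)) i 3).Pairwise (· < ·) := by
    rw [map_cyc_sortedIdx]
    exact pairwise_sortedTrigrams s
  have hk : 3 ≤ (Sstr (s + 2)).length := by rw [length_Sstr]; nlinarith
  rw [cBWT_eq_map_symBefore hk (fun _ => lt_length_of_mem_sortedIdx) length_sortedIdx hkeys,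
    sortedIdx, map_append, map_flatMap,
    flatMap_congr fun c hc => map_symBefore_groupIdx (by simp at hc; omega),
    map_symBefore_topIdx, flatMap_range_const_cons_append]
  simp [pattern, patFinal, patBlock, range_succ]

end SortedOrder

/-- the cyclic BWT of S_σ has exactly σ² + 2 runs. -/
theorem stmt7 (σ : ℕ) (hσ : 2 ≤ σ) :
    runsCount (cBWT (Sstr σ)) = σ ^ 2 + 2 := by
  obtain ⟨s, rfl⟩ := Nat.exists_eq_add_of_le' hσ
  rw [cBWT_Sstr, runsCount_pattern]
  ring
end
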